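/- arXiv:1301.6652 — 2 statements merged into one kernel-verified Lean document; each statement's English description precedes it below -/
import Mathlib

section
/- For a finite poset X, the category of left modules over the incidence algebra ℤX is equivalent to the category of functors from X^op (the opposite poset viewed as a category) to abelian groups. -/
/-!
A representation `F` gives the module `∏ₓ F(x)`, on which `f` acts by
`(f • m) x = ∑ y, f x y • F(x ≤ y) (m y)`. The matrix units `matrixUnit x x` are orthogonal
idempotents summing to `1`, so every module `M` is the direct sum of the groups
`matrixUnit x x • M`, and these form a representation whose structure maps are the actions of
the `matrixUnit x y`; this gives essential surjectivity. A module map commutes with the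
idempotents, hence preserves the components, and is therefore induced by a natural
transformation; this gives fullness.
-/

open CategoryTheory Opposite

universe u

namespace IncidenceAlgebra

section MatrixUnit

variable {𝕜 α : Type*}

lemma sum_apply [AddCommMonoid 𝕜] [LE α] {ι : Type*} (s : Finset ι)
    (f : ι → IncidenceAlgebra 𝕜 α) (a b : α) :
    (∑ i ∈ s, f i) a b = ∑ i ∈ s, f i a b :=
  map_sum (⟨⟨fun f => f a b, rfl⟩, fun _ _ => rfl⟩ : IncidenceAlgebra 𝕜 α →+ 𝕜) f s

variable [Semiring 𝕜] [Preorder α]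

lemma mul_apply_eq_sum [LocallyFiniteOrder α] [Fintype α] (f g : IncidenceAlgebra 𝕜 α)
    (a b : α) : (f * g) a b = ∑ c, f a c * g c b := by
  rw [mul_apply]
  refine Finset.sum_subset (Finset.subset_univ _) fun c _ hc => ?_
  rcases not_and_or.1 (Finset.mem_Icc.not.1 hc) with h | h
  · rw [apply_eq_zero_of_not_le h, zero_mul]
  · rw [apply_eq_zero_of_not_le h, mul_zero]

variable [DecidableEq α]

/-- The paper's basis element `i_x^y` (for `y ≤ x`) is `matrixUnit y x`. -/
noncomputable def matrixUnit (x y : α) : IncidenceAlgebra 𝕜 α :=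
  open Classical in
  ⟨fun a b => if a = x ∧ b = y ∧ x ≤ y then 1 else 0,
    fun _ _ hab => if_neg fun ⟨hax, hby, hxy⟩ => hab (hax ▸ hby ▸ hxy)⟩

open Classical in
lemma matrixUnit_apply (x y a b : α) :
    matrixUnit x y a b = if a = x ∧ b = y ∧ x ≤ y then (1 : 𝕜) else 0 :=
  rfl

lemma matrixUnit_of_not_le {x y : α} (h : ¬x ≤ y) :
    (matrixUnit x y : IncidenceAlgebra 𝕜 α) = 0 := by
  ext a b
  simp [matrixUnit_apply, h]

lemma sum_matrixUnit_self [Fintype α] : ∑ x, (matrixUnit x x : IncidenceAlgebra 𝕜 α) = 1 := by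
  ext a b
  simp [sum_apply, matrixUnit_apply, ite_and, eq_comm]

variable [LocallyFiniteOrder α]

lemma matrixUnit_mul_matrixUnit {x y z : α} (hxy : x ≤ y) (hyz : y ≤ z) :
    (matrixUnit x y * matrixUnit y z : IncidenceAlgebra 𝕜 α) = matrixUnit x z := by
  ext a b
  simp only [mul_apply, matrixUnit_apply, hxy, hyz, hxy.trans hyz, and_true, ite_and,
    Finset.sum_ite_eq', mul_ite, mul_one, mul_zero, if_true]
  split_ifs <;> simp_all [Finset.mem_Icc]

lemma matrixUnit_mul_matrixUnit_of_ne {x y z w : α} (h : y ≠ z) :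
    (matrixUnit x y * matrixUnit z w : IncidenceAlgebra 𝕜 α) = 0 := by
  ext a b
  refine Finset.sum_eq_zero fun c _ => ?_
  simp only [matrixUnit_apply]
  split_ifs <;> simp_all

lemma mul_matrixUnit_self [Fintype α] (f : IncidenceAlgebra 𝕜 α) (y : α) :
    f * matrixUnit y y = ∑ x, f x y • matrixUnit x y := by
  ext a b
  simp only [mul_apply, sum_apply, constSMul_apply, matrixUnit_apply, le_refl, and_true, ite_and,
    smul_eq_mul, mul_ite, mul_one, mul_zero, Finset.sum_ite_eq']
  split_ifs <;> simp_all [Finset.mem_Icc]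

end MatrixUnit

section Transport

variable {X : Type u} [Preorder X] (F : Xᵒᵖ ⥤ AddCommGrpCat.{u})

/-- Extended by `0` off `x ≤ y`, so that the action of the incidence algebra can sum over all
of `X`. -/
noncomputable def transport (x y : X) : F.obj (op y) →+ F.obj (op x) :=
  open Classical in
  if h : x ≤ y then (F.map (homOfLE h).op).hom else 0

variable {F}

lemma transport_of_le {x y : X} (h : x ≤ y) : transport F x y = (F.map (homOfLE h).op).hom :=
  dif_pos h

lemma transport_of_le_apply {x y : X} (h : x ≤ y) (v : F.obj (op y)) :
    transport F x y v = F.map (homOfLE h).op v := by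
  rw [transport_of_le h]

lemma transport_of_not_le {x y : X} (h : ¬x ≤ y) : transport F x y = 0 :=
  dif_neg h

lemma transport_self_apply (x : X) (v : F.obj (op x)) : transport F x x v = v := by
  rw [transport_of_le le_rfl, show (homOfLE (le_refl x)).op = 𝟙 (op x) from rfl, F.map_id]
  rfl

lemma transport_transport {x y z : X} (hxy : x ≤ y) (hyz : y ≤ z) (v : F.obj (op z)) :
    transport F x y (transport F y z v) = transport F x z v := by
  rw [transport_of_le hxy, transport_of_le hyz, transport_of_le (hxy.trans hyz),
    show (homOfLE (hxy.trans hyz)).op = (homOfLE hyz).op ≫ (homOfLE hxy).op from rfl,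
    F.map_comp]
  rfl

lemma transport_naturality {G : Xᵒᵖ ⥤ AddCommGrpCat.{u}} (α : F ⟶ G) (x y : X)
    (v : F.obj (op y)) : α.app (op x) (transport F x y v) = transport G x y (α.app (op y) v) := by
  by_cases h : x ≤ y
  · rw [transport_of_le h, transport_of_le h, ← ConcreteCategory.comp_apply, α.naturality]
    rfl
  · simp [transport_of_not_le h]

end Transport

section RepTotal

variable {X : Type u} [Preorder X]

abbrev RepTotal (F : Xᵒᵖ ⥤ AddCommGrpCat.{u}) : Type u := ∀ x : X, F.obj (op x)

variable [Fintype X] (F : Xᵒᵖ ⥤ AddCommGrpCat.{u})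

noncomputable def repActionEnd (f : IncidenceAlgebra ℤ X) : Module.End ℤ (RepTotal F) where
  toFun m x := ∑ y, f x y • transport F x y (m y)
  map_add' m n := by ext; simp [Finset.sum_add_distrib]
  map_smul' c m := by ext; simp [Finset.smul_sum, smul_comm c]

lemma repActionEnd_apply (f : IncidenceAlgebra ℤ X) (m : RepTotal F) (x : X) :
    repActionEnd F f m x = ∑ y, f x y • transport F x y (m y) :=
  rfl

variable [LocallyFiniteOrder X] [DecidableEq X]

noncomputable def repAction : IncidenceAlgebra ℤ X →+* Module.End ℤ (RepTotal F) where
  toFun := repActionEnd F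
  map_zero' := LinearMap.ext fun m => funext fun x => by simp [repActionEnd_apply]
  map_add' f g := LinearMap.ext fun m => funext fun x => by
    simp [repActionEnd_apply, add_smul, Finset.sum_add_distrib]
  map_one' := LinearMap.ext fun m => funext fun x => by
    simp [repActionEnd_apply, one_apply, transport_self_apply]
  map_mul' f g := LinearMap.ext fun m => funext fun x => by
    -- off `x ≤ z ≤ y` both sides vanish, since `f x z = 0` or `g z y = 0`
    have hterm : ∀ z y, f x z • g z y • transport F x z (transport F z y (m y))
        = (f x z * g z y) • transport F x y (m y) := by
      intro z y
      by_cases hxz : x ≤ z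
      · by_cases hzy : z ≤ y
        · rw [transport_transport hxz hzy, mul_smul]
        · rw [apply_eq_zero_of_not_le hzy, mul_zero, zero_smul, zero_smul, smul_zero]
      · rw [apply_eq_zero_of_not_le hxz, zero_mul, zero_smul, zero_smul]
    simp only [Module.End.mul_apply, repActionEnd_apply, map_sum, map_zsmul, Finset.smul_sum,
      hterm, mul_apply_eq_sum, Finset.sum_smul]
    exact Finset.sum_comm

noncomputable instance : Module (IncidenceAlgebra ℤ X) (RepTotal F) :=
  Module.compHom _ (repAction F)

lemma repTotal_smul_apply (f : IncidenceAlgebra ℤ X) (m : RepTotal F) (x : X) :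
    (f • m) x = ∑ y, f x y • transport F x y (m y) :=
  rfl

lemma matrixUnit_smul (x y : X) (m : RepTotal F) :
    (matrixUnit x y : IncidenceAlgebra ℤ X) • m = Pi.single x (transport F x y (m y)) := by
  ext z
  rw [repTotal_smul_apply]
  by_cases hz : z = x
  · subst hz
    by_cases h : z ≤ y
    · simp [matrixUnit_apply, h]
    · simp [matrixUnit_apply, h, transport_of_not_le h]
  · simp [matrixUnit_apply, hz]

lemma matrixUnit_self_smul (x : X) (m : RepTotal F) :
    (matrixUnit x x : IncidenceAlgebra ℤ X) • m = Pi.single x (m x) := by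
  rw [matrixUnit_smul, transport_self_apply]

end RepTotal

section RepToModule

variable {X : Type u} [Preorder X] [LocallyFiniteOrder X] [DecidableEq X] [Fintype X]

noncomputable def repToModuleLinearMap {F G : Xᵒᵖ ⥤ AddCommGrpCat.{u}} (α : F ⟶ G) :
    RepTotal F →ₗ[IncidenceAlgebra ℤ X] RepTotal G where
  toFun m x := α.app (op x) (m x)
  map_add' m n := by ext; simp
  map_smul' f m := by ext x; simp [repTotal_smul_apply, transport_naturality]

variable (X) in
noncomputable def repToModule :
    (Xᵒᵖ ⥤ AddCommGrpCat.{u}) ⥤ ModuleCat.{u} (IncidenceAlgebra ℤ X) where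
  obj F := ModuleCat.of _ (RepTotal F)
  map α := ModuleCat.ofHom (repToModuleLinearMap α)

instance : (repToModule X).Faithful where
  map_injective {F G} {α β} h := by
    ext x v
    have h' := congr_fun (congr(($h).hom (Pi.single x.unop v : RepTotal F))) x.unop
    change α.app x ((Pi.single x.unop v : RepTotal F) x.unop)
      = β.app x ((Pi.single x.unop v : RepTotal F) x.unop) at h'
    rwa [Pi.single_eq_same] at h'

noncomputable def repHomOfLinearMap {F G : Xᵒᵖ ⥤ AddCommGrpCat.{u}}
    (ψ : RepTotal F →ₗ[IncidenceAlgebra ℤ X] RepTotal G) : F ⟶ G where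
  app x := AddCommGrpCat.ofHom
    ((Pi.evalAddMonoidHom _ x.unop).comp (ψ.toAddMonoidHom.comp (AddMonoidHom.single _ x.unop)))
  naturality {x y} u := by
    have h : y.unop ≤ x.unop := leOfHom u.unop
    obtain rfl : u = (homOfLE h).op := Subsingleton.elim _ _
    ext v
    change ψ (Pi.single y.unop (F.map (homOfLE h).op v)) y.unop
      = G.map (homOfLE h).op (ψ (Pi.single x.unop v) x.unop)
    rw [← transport_of_le_apply, ← transport_of_le_apply]
    have hsingle : (Pi.single y.unop (transport F y.unop x.unop v) : RepTotal F)
        = (matrixUnit y.unop x.unop : IncidenceAlgebra ℤ X) • (Pi.single x.unop v : RepTotal F) := by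
      rw [matrixUnit_smul, Pi.single_eq_same]
    rw [hsingle, map_smul, matrixUnit_smul, Pi.single_eq_same]

lemma repToModule_map_repHomOfLinearMap {F G : Xᵒᵖ ⥤ AddCommGrpCat.{u}}
    (ψ : RepTotal F →ₗ[IncidenceAlgebra ℤ X] RepTotal G) :
    (repToModule X).map (repHomOfLinearMap ψ) = ModuleCat.ofHom ψ := by
  refine ModuleCat.hom_ext (LinearMap.ext fun (m : RepTotal F) => funext fun x => ?_)
  change ψ (Pi.single x (m x)) x = ψ m x
  rw [← matrixUnit_self_smul, map_smul, matrixUnit_self_smul, Pi.single_eq_same]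

instance : (repToModule X).Full where
  map_surjective ψ := ⟨repHomOfLinearMap ψ.hom, repToModule_map_repHomOfLinearMap ψ.hom⟩

end RepToModule

section RepOfModule

variable {X : Type u} [Preorder X] [LocallyFiniteOrder X] [DecidableEq X]
  (M : ModuleCat.{u} (IncidenceAlgebra ℤ X))

noncomputable def fixedPoints (x : X) : AddSubgroup M :=
  (DistribSMul.toAddMonoidHom M (matrixUnit x x : IncidenceAlgebra ℤ X)).eqLocus
    (AddMonoidHom.id M)

variable {M} in
lemma matrixUnit_smul_of_mem_fixedPoints {x : X} {m : M} (hm : m ∈ fixedPoints M x) :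
    (matrixUnit x x : IncidenceAlgebra ℤ X) • m = m :=
  hm

lemma matrixUnit_smul_mem_fixedPoints {x y : X} (hxy : x ≤ y) (m : M) :
    (matrixUnit x y : IncidenceAlgebra ℤ X) • m ∈ fixedPoints M x := by
  change (matrixUnit x x : IncidenceAlgebra ℤ X) • (_ : M) = _
  rw [smul_smul, matrixUnit_mul_matrixUnit le_rfl hxy]
  rfl

noncomputable def repOfModule : Xᵒᵖ ⥤ AddCommGrpCat.{u} where
  obj x := AddCommGrpCat.of (fixedPoints M x.unop)
  map {x y} u := AddCommGrpCat.ofHom <|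
    ((DistribSMul.toAddMonoidHom M (matrixUnit y.unop x.unop)).comp
      (AddSubgroup.subtype _)).codRestrict _
      fun m => matrixUnit_smul_mem_fixedPoints M (leOfHom u.unop) m
  map_id x := by
    ext m
    exact matrixUnit_smul_of_mem_fixedPoints m.2
  map_comp {x y z} u v := by
    ext m
    change (matrixUnit z.unop x.unop : IncidenceAlgebra ℤ X) • (m : M)
      = (matrixUnit z.unop y.unop : IncidenceAlgebra ℤ X) •
        (matrixUnit y.unop x.unop : IncidenceAlgebra ℤ X) • (m : M)
    rw [smul_smul, matrixUnit_mul_matrixUnit (leOfHom v.unop) (leOfHom u.unop)]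

lemma val_transport_repOfModule (x y : X) (v : (repOfModule M).obj (op y)) :
    (transport (repOfModule M) x y v).val = (matrixUnit x y : IncidenceAlgebra ℤ X) • v.val := by
  by_cases h : x ≤ y
  · rw [transport_of_le h]
    rfl
  · rw [transport_of_not_le h, matrixUnit_of_not_le h, zero_smul]
    rfl

variable [Fintype X]

noncomputable def repTotalRepOfModuleEquiv :
    RepTotal (repOfModule M) ≃ₗ[IncidenceAlgebra ℤ X] M where
  toFun m := ∑ x, (m x).val
  map_add' m n := Finset.sum_add_distrib
  map_smul' f m := by
    rw [RingHom.id_apply]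
    have hsmul : ∀ x,
        ((f • m) x).val = ∑ y, (f x y • matrixUnit x y : IncidenceAlgebra ℤ X) • (m y).val := by
      intro x
      refine (map_sum (fixedPoints M x).subtype _ _).trans (Finset.sum_congr rfl fun y _ => ?_)
      refine (map_zsmul (fixedPoints M x).subtype _ _).trans ?_
      rw [AddSubgroup.coe_subtype, val_transport_repOfModule, smul_assoc]
    calc ∑ x, ((f • m) x).val
        = ∑ y, (∑ x, f x y • matrixUnit x y : IncidenceAlgebra ℤ X) • (m y).val := by
          simp only [hsmul, Finset.sum_smul]
          exact Finset.sum_comm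
      _ = ∑ y, f • (m y).val := by
          simp only [← mul_matrixUnit_self, mul_smul, matrixUnit_smul_of_mem_fixedPoints (m _).2]
      _ = f • ∑ y, (m y).val := Finset.smul_sum.symm
  invFun n x := ⟨_, matrixUnit_smul_mem_fixedPoints M le_rfl n⟩
  left_inv m := funext fun x => Subtype.ext <| by
    change (matrixUnit x x : IncidenceAlgebra ℤ X) • ∑ y, (m y).val = (m x).val
    rw [Finset.smul_sum, Fintype.sum_eq_single x fun y hyx => ?_]
    · exact matrixUnit_smul_of_mem_fixedPoints (m x).2
    rw [← matrixUnit_smul_of_mem_fixedPoints (m y).2, smul_smul,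
      matrixUnit_mul_matrixUnit_of_ne hyx.symm, zero_smul]
  right_inv n := by
    simp only [← Finset.sum_smul, sum_matrixUnit_self, one_smul]

end RepOfModule

variable {X : Type u} [Preorder X] [LocallyFiniteOrder X] [DecidableEq X] [Fintype X]

instance : (repToModule X).EssSurj where
  mem_essImage M := ⟨repOfModule M, ⟨(repTotalRepOfModuleEquiv M).toModuleIso⟩⟩

instance : (repToModule X).IsEquivalence where

end IncidenceAlgebra

/-- For a finite poset `X`, the category of left modules over the incidence algebra `ℤX`
is equivalent to the category of covariant functors `Xᵒᵖ ⥤ Ab` (representations of `X`). -/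
theorem stmt_9 (X : Type) [Fintype X] [PartialOrder X] [DecidableEq X]
    [LocallyFiniteOrder X] :
    Nonempty (ModuleCat.{0} (IncidenceAlgebra ℤ X) ≌ (Xᵒᵖ ⥤ AddCommGrpCat.{0})) :=
  ⟨(IncidenceAlgebra.repToModule X).asEquivalence.symm⟩
end

section
/- Let X be a finite T0 space. The restriction functor Res, sending a cosheaf M on the opens of X to the representation x ↦ M(U_x), and the functor Colim, extending a representation N of X to the precosheaf U ↦ coker( ⊕_{x,y∈U} ⊕_{z ∈ U_x∩U_y} N(z) → ⊕_{x∈U} N(x) ) (with the map given on the (x,y,z)-summand by N(i_z^x) − N(i_z^y)), are mutually inverse equivalences between the category of cosheaves of abelian groups on Open(X) and the category of representations of X (functors X^op → Ab). -/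
/-!
Every open `U` of a finite space is covered by the minimal neighbourhoods `U_x` with `x ∈ U`, and
`U_x ∩ U_y` by the `U_z` it contains. So for a cosheaf `F` the group `F(U)` is the cokernel of
`⊕ F(U_x ∩ U_y) → ⊕ F(U_x)`: a map out of `F(U)` is determined by its restrictions to the
`F(U_x)`, and a family of maps on the `F(U_x)` that is natural in `x` extends to all opens. Hence
`Res` is fully faithful.

`Res` is essentially surjective because `Colim N (U_x) ≅ N(x)` (`x` is the greatest point of
`U_x`) and `Colim N` is a cosheaf: for a cover `{U_j}` of `V`, sending a generator `a ∈ N(x)` of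
`Colim N (V)` to its class in `Colim N (U_j)` for any `U_j ∋ x` is well defined modulo the image
of `⊕ Colim N (U_j ∩ U_k)`, and is a section of `⊕ Colim N (U_j) → Colim N (V)` over the
cokernel. Below, `Res` is `res` and `Colim` is `colimExt`.
-/

open CategoryTheory TopologicalSpace
open scoped DirectSum

/-- Minimal open neighbourhood of a point: intersection of all opens containing it. -/
def minSet {X : Type} [TopologicalSpace X] (x : X) : Set X :=
  ⋂₀ {U : Set X | IsOpen U ∧ x ∈ U}

lemma isOpen_minSet {X : Type} [TopologicalSpace X] [Finite X] (x : X) :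
    IsOpen (minSet x) :=
  Set.Finite.isOpen_sInter (Set.toFinite _) (fun _ ht => ht.1)

/-- The minimal open neighbourhood `U_x` as an open set. -/
def minOpens {X : Type} [TopologicalSpace X] [Finite X] (x : X) : Opens X :=
  ⟨minSet x, isOpen_minSet x⟩

/-- `X` with the partial order `x ≤ y iff U_x ⊆ U_y`, i.e. the opposite of the
specialization order; representations of `X` are functors on this poset. -/
def XOrd (X : Type) : Type := X

instance (X : Type) [TopologicalSpace X] : Preorder (XOrd X) where
  le x y := minSet (X := X) x ⊆ minSet (X := X) y
  le_refl _ := subset_rfl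
  le_trans _ _ _ h h' := Set.Subset.trans h h'

/-- The cosheaf condition for a precosheaf `F` on the opens of `X`: for every open cover
`{U_j}` the sequence `⊕_{j,k} F(U_j ∩ U_k) → ⊕_j F(U_j) → F(⋃ U_j) → 0` is exact. -/
noncomputable def IsCosheaf {X : Type} [TopologicalSpace X]
    (F : Opens X ⥤ AddCommGrpCat.{0}) : Prop :=
  ∀ (J : Type) [DecidableEq J] (U : J → Opens X),
    Function.Surjective
      (DirectSum.toAddMonoid (fun j =>
        ((F.map (homOfLE (le_iSup U j))).hom : F.obj (U j) →+ F.obj (⨆ j, U j)))) ∧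
    Function.Exact
      (DirectSum.toAddMonoid (fun p : J × J =>
        (DirectSum.of (fun j => F.obj (U j)) p.1).comp
            ((F.map (homOfLE inf_le_left)).hom : F.obj (U p.1 ⊓ U p.2) →+ F.obj (U p.1))
        - (DirectSum.of (fun j => F.obj (U j)) p.2).comp
            ((F.map (homOfLE inf_le_right)).hom : F.obj (U p.1 ⊓ U p.2) →+ F.obj (U p.2))))
      (DirectSum.toAddMonoid (fun j =>
        ((F.map (homOfLE (le_iSup U j))).hom : F.obj (U j) →+ F.obj (⨆ j, U j))))

lemma map_map_apply {P : Type*} [Preorder P] (F : P ⥤ AddCommGrpCat) {a b c : P}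
    (f : a ⟶ b) (g : b ⟶ c) (h : a ⟶ c) (x : F.obj a) :
    (F.map g).hom ((F.map f).hom x) = (F.map h).hom x := by
  rw [← AddCommGrpCat.comp_apply, ← F.map_comp, Subsingleton.elim (f ≫ g) h]

section MinimalOpens

variable {X : Type} [TopologicalSpace X]

lemma mem_minSet (x : X) : x ∈ minSet x := fun _ hU => hU.2

lemma minSet_subset {U : Set X} (hU : IsOpen U) {x : X} (hx : x ∈ U) : minSet x ⊆ U :=
  Set.sInter_subset_of_mem ⟨hU, hx⟩

def toOrd (x : X) : XOrd X := x

variable [Finite X]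

lemma toOrd_le_iff {z x : X} : toOrd z ≤ toOrd x ↔ z ∈ minSet x :=
  ⟨fun h => h (mem_minSet z), fun h => minSet_subset (isOpen_minSet x) h⟩

lemma toOrd_le_of_mem_minOpens {z x : X} (h : z ∈ minOpens x) : toOrd z ≤ toOrd x :=
  toOrd_le_iff.mpr h

lemma minOpens_le {U : Opens X} {x : X} (hx : x ∈ U) : minOpens x ≤ U :=
  minSet_subset U.2 hx

lemma iSup_minOpens (U : Opens X) : ⨆ z : U, minOpens (z : X) = U :=
  le_antisymm (iSup_le fun z => minOpens_le z.2)
    fun x hx => Opens.mem_iSup.mpr ⟨⟨x, hx⟩, mem_minSet x⟩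

variable (X) in
def minOpensFunctor : XOrd X ⥤ Opens X where
  obj x := minOpens (X := X) x
  map f := homOfLE (leOfHom f)

end MinimalOpens

section Cover

variable {X : Type} [TopologicalSpace X] (F : Opens X ⥤ AddCommGrpCat.{0})
  {J : Type} (U : J → Opens X)

def CoverCompatible {A : Type} [AddCommGroup A] (ψ : ∀ j, F.obj (U j) →+ A) : Prop :=
  ∀ j k, (ψ j).comp (F.map (homOfLE inf_le_left)).hom =
    (ψ k).comp (F.map (homOfLE (inf_le_right : U j ⊓ U k ≤ U k))).hom

variable [DecidableEq J]

noncomputable def coverSum {V : Opens X} (hUV : ∀ j, U j ≤ V) :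
    (⨁ j, F.obj (U j)) →+ F.obj V :=
  DirectSum.toAddMonoid fun j => (F.map (homOfLE (hUV j))).hom

noncomputable def coverDiff : (⨁ p : J × J, F.obj (U p.1 ⊓ U p.2)) →+ ⨁ j, F.obj (U j) :=
  DirectSum.toAddMonoid fun p =>
    (DirectSum.of (fun j => F.obj (U j)) p.1).comp (F.map (homOfLE inf_le_left)).hom
      - (DirectSum.of (fun j => F.obj (U j)) p.2).comp (F.map (homOfLE inf_le_right)).hom

@[simp]
lemma coverSum_of {V : Opens X} (hUV : ∀ j, U j ≤ V) (j : J) (a : F.obj (U j)) :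
    coverSum F U hUV (DirectSum.of _ j a) = F.map (homOfLE (hUV j)) a :=
  DirectSum.toAddMonoid_of _ _ _

@[simp]
lemma coverDiff_of (p : J × J) (a : F.obj (U p.1 ⊓ U p.2)) :
    coverDiff F U (DirectSum.of _ p a) =
      DirectSum.of (fun j => F.obj (U j)) p.1 (F.map (homOfLE inf_le_left) a)
        - DirectSum.of (fun j => F.obj (U j)) p.2 (F.map (homOfLE inf_le_right) a) :=
  DirectSum.toAddMonoid_of _ _ _

lemma isCosheaf_iff : IsCosheaf F ↔ ∀ (J : Type) [DecidableEq J] (U : J → Opens X),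
    Function.Surjective (coverSum F U (le_iSup U)) ∧
      Function.Exact (coverDiff F U) (coverSum F U (le_iSup U)) :=
  Iff.rfl

variable {F} {V : Opens X} (hUV : ∀ j, U j ≤ V)

lemma IsCosheaf.surjective_coverSum (hF : IsCosheaf F) (hV : ⨆ j, U j = V) :
    Function.Surjective (coverSum F U hUV) := by
  subst hV; exact ((isCosheaf_iff F).mp hF J U).1

lemma IsCosheaf.exact_cover (hF : IsCosheaf F) (hV : ⨆ j, U j = V) :
    Function.Exact (coverDiff F U) (coverSum F U hUV) := by
  subst hV; exact ((isCosheaf_iff F).mp hF J U).2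

lemma IsCosheaf.hom_ext_of_cover (hF : IsCosheaf F) (hV : ⨆ j, U j = V) {A : Type}
    [AddCommGroup A] {g₁ g₂ : F.obj V →+ A}
    (h : ∀ j, g₁.comp (F.map (homOfLE (hUV j))).hom = g₂.comp (F.map (homOfLE (hUV j))).hom) :
    g₁ = g₂ := by
  have hsum : g₁.comp (coverSum F U hUV) = g₂.comp (coverSum F U hUV) :=
    DirectSum.addHom_ext fun j a => by simpa using DFunLike.congr_fun (h j) a
  ext y
  obtain ⟨d, rfl⟩ := hF.surjective_coverSum U hUV hV y
  exact DFunLike.congr_fun hsum d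

variable {A : Type} [AddCommGroup A] (ψ : ∀ j, F.obj (U j) →+ A)

lemma IsCosheaf.ker_coverSum_le (hF : IsCosheaf F) (hV : ⨆ j, U j = V)
    (hψ : CoverCompatible F U ψ) :
    (coverSum F U hUV).ker ≤ (DirectSum.toAddMonoid ψ).ker := by
  have hzero : (DirectSum.toAddMonoid ψ).comp (coverDiff F U) = 0 :=
    DirectSum.addHom_ext fun p a => by
      simpa [sub_eq_zero] using DFunLike.congr_fun (hψ p.1 p.2) a
  intro d hd
  obtain ⟨c, rfl⟩ := (hF.exact_cover U hUV hV d).mp hd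
  exact DFunLike.congr_fun hzero c

noncomputable def IsCosheaf.desc (hF : IsCosheaf F) (hV : ⨆ j, U j = V)
    (hψ : CoverCompatible F U ψ) :
    F.obj V →+ A :=
  (coverSum F U hUV).liftOfRightInverse (Function.surjInv (hF.surjective_coverSum U hUV hV))
    (Function.rightInverse_surjInv _)
    ⟨DirectSum.toAddMonoid ψ, hF.ker_coverSum_le U hUV ψ hV hψ⟩

@[simp]
lemma IsCosheaf.desc_map (hF : IsCosheaf F) (hV : ⨆ j, U j = V)
    (hψ : CoverCompatible F U ψ) (j : J) (a : F.obj (U j)) :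
    hF.desc U hUV ψ hV hψ (F.map (homOfLE (hUV j)) a) = ψ j a := by
  rw [← coverSum_of F U hUV, IsCosheaf.desc, AddMonoidHom.liftOfRightInverse_comp_apply]
  exact DirectSum.toAddMonoid_of _ _ _

end Cover

section Extension

variable {X : Type} [TopologicalSpace X] [Finite X] {F : Opens X ⥤ AddCommGrpCat.{0}}

open scoped Classical in
lemma IsCosheaf.hom_ext_minOpens (hF : IsCosheaf F) {W : Opens X} {A : Type} [AddCommGroup A]
    {g₁ g₂ : F.obj W →+ A}
    (h : ∀ z : W, g₁.comp (F.map (homOfLE (minOpens_le z.2))).hom =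
      g₂.comp (F.map (homOfLE (minOpens_le z.2))).hom) : g₁ = g₂ :=
  hF.hom_ext_of_cover (fun z : W => minOpens (z : X)) _ (iSup_minOpens W) h

variable {G : Opens X ⥤ AddCommGrpCat.{0}}
  (τ : ∀ x : X, F.obj (minOpens x) →+ G.obj (minOpens x))

variable (F G) in
def MinOpensNatural : Prop :=
  ∀ {u v : X} (h : minOpens u ≤ minOpens v) (a : F.obj (minOpens u)),
    τ v ((F.map (homOfLE h)).hom a) = (G.map (homOfLE h)).hom (τ u a)

lemma IsCosheaf.coverCompatible_extend (hF : IsCosheaf F)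
    (hτ : MinOpensNatural F G τ)
    (W : Opens X) :
    CoverCompatible F (fun z : W => minOpens (z : X))
      fun z => (G.map (homOfLE (minOpens_le z.2))).hom.comp (τ z) := by
  intro z w
  refine hF.hom_ext_minOpens fun u => ?_
  ext a
  have hz : minOpens (u : X) ≤ minOpens (z : X) := (minOpens_le u.2).trans inf_le_left
  have hw : minOpens (u : X) ≤ minOpens (w : X) := (minOpens_le u.2).trans inf_le_right
  have hW : minOpens (u : X) ≤ W := hz.trans (minOpens_le z.2)
  simp only [AddMonoidHom.comp_apply]
  rw [map_map_apply F _ _ (homOfLE hz), map_map_apply F _ _ (homOfLE hw), hτ hz, hτ hw,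
    map_map_apply G _ _ (homOfLE hW), map_map_apply G _ _ (homOfLE hW)]

open scoped Classical in
noncomputable def IsCosheaf.extendApp (hF : IsCosheaf F)
    (hτ : MinOpensNatural F G τ)
    (W : Opens X) : F.obj W →+ G.obj W :=
  hF.desc (fun z : W => minOpens (z : X)) (fun z => minOpens_le z.2)
    (fun z => (G.map (homOfLE (minOpens_le z.2))).hom.comp (τ z)) (iSup_minOpens W)
    (hF.coverCompatible_extend τ hτ W)

open scoped Classical in
lemma IsCosheaf.extendApp_map (hF : IsCosheaf F)
    (hτ : MinOpensNatural F G τ)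
    {W : Opens X} {z : X} (hz : z ∈ W) (a : F.obj (minOpens z)) :
    hF.extendApp τ hτ W ((F.map (homOfLE (minOpens_le hz))).hom a) =
      (G.map (homOfLE (minOpens_le hz))).hom (τ z a) :=
  hF.desc_map (fun z : W => minOpens (z : X)) (fun z => minOpens_le z.2)
    (fun z => (G.map (homOfLE (minOpens_le z.2))).hom.comp (τ z)) (iSup_minOpens W)
    (hF.coverCompatible_extend τ hτ W) ⟨z, hz⟩ a

noncomputable def IsCosheaf.extend (hF : IsCosheaf F)
    (hτ : MinOpensNatural F G τ) : F ⟶ G where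
  app W := AddCommGrpCat.ofHom (hF.extendApp τ hτ W)
  naturality U V f := by
    refine AddCommGrpCat.hom_ext (hF.hom_ext_minOpens fun z => ?_)
    ext a
    have hzV : (z : X) ∈ V := leOfHom f z.2
    simp only [AddMonoidHom.comp_apply, AddCommGrpCat.hom_comp, AddCommGrpCat.hom_ofHom]
    rw [map_map_apply F _ _ (homOfLE (minOpens_le hzV)), hF.extendApp_map τ hτ hzV,
      hF.extendApp_map τ hτ z.2, map_map_apply G]

end Extension

section Restriction

variable (X : Type) [TopologicalSpace X] [Finite X]

abbrev Cosheaf : Type 1 := ObjectProperty.FullSubcategory (IsCosheaf (X := X))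

noncomputable def res : Cosheaf X ⥤ (XOrd X ⥤ AddCommGrpCat.{0}) :=
  ObjectProperty.ι _ ⋙ (Functor.whiskeringLeft _ _ _).obj (minOpensFunctor X)

variable {X}

lemma res_naturality_apply {F G : Cosheaf X} (τ : (res X).obj F ⟶ (res X).obj G) {u v : X}
    (h : minOpens u ≤ minOpens v) (a : F.obj.obj (minOpens u)) :
    (τ.app (toOrd v)).hom ((F.obj.map (homOfLE h)).hom a) =
      (G.obj.map (homOfLE h)).hom ((τ.app (toOrd u)).hom a) :=
  NatTrans.naturality_apply τ (homOfLE (show toOrd u ≤ toOrd v from h)) a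

noncomputable instance : (res X).Full where
  map_surjective {F G} τ := by
    refine ⟨ObjectProperty.homMk (F.property.extend (fun x => (τ.app (toOrd x)).hom)
      (res_naturality_apply τ)), ?_⟩
    ext x : 2
    refine AddCommGrpCat.hom_ext (F.property.hom_ext_minOpens fun z => ?_)
    ext a
    exact (F.property.extendApp_map _ (res_naturality_apply τ) z.2 a).trans
      (res_naturality_apply τ (minOpens_le z.2) a).symm

instance : (res X).Faithful where
  map_injective {F G φ ψ} h := by
    ext W : 3
    refine AddCommGrpCat.hom_ext (F.property.hom_ext_minOpens fun z => ?_)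
    ext a
    have hz : φ.hom.app (minOpens (z : X)) = ψ.hom.app (minOpens (z : X)) :=
      congr_app h (toOrd (z : X))
    exact (NatTrans.naturality_apply φ.hom (homOfLE (minOpens_le z.2)) a).trans
      (hz ▸ NatTrans.naturality_apply ψ.hom (homOfLE (minOpens_le z.2)) a).symm

end Restriction

section ColimitExtension

open scoped Classical

variable {X : Type} [TopologicalSpace X] (N : XOrd X ⥤ AddCommGrpCat.{0})

-- The paper's relations `N(i_z^x) a - N(i_z^y) a`, for `z ∈ U_x ∩ U_y`, generate the same
-- subgroup: these are the case `y = z`, and the general one is a difference of two of these.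
def colimRel (U : Opens X) : AddSubgroup (⨁ x : U, N.obj (toOrd (x : X))) :=
  AddSubgroup.closure {d | ∃ (z x : U) (h : toOrd (z : X) ≤ toOrd (x : X))
    (a : N.obj (toOrd (z : X))),
      d = DirectSum.of _ x ((N.map (homOfLE h)).hom a) - DirectSum.of _ z a}

lemma colimRel_le_comap {U V : Opens X} (hUV : U ≤ V) :
    colimRel N U ≤ (colimRel N V).comap
      (DirectSum.toAddMonoid fun x : U =>
        DirectSum.of (fun y : V => N.obj (toOrd (y : X))) ⟨x, hUV x.2⟩) :=
  (AddSubgroup.closure_le _).mpr <| by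
    rintro _ ⟨z, x, h, a, rfl⟩
    exact AddSubgroup.subset_closure ⟨⟨z, hUV z.2⟩, ⟨x, hUV x.2⟩, h, a, by simp⟩

noncomputable def colimExt : Opens X ⥤ AddCommGrpCat.{0} where
  obj U := AddCommGrpCat.of ((⨁ x : U, N.obj (toOrd (x : X))) ⧸ colimRel N U)
  map f := AddCommGrpCat.ofHom (QuotientAddGroup.map _ _ _ (colimRel_le_comap N (leOfHom f)))
  map_id U := AddCommGrpCat.hom_ext <| QuotientAddGroup.addMonoidHom_ext _ <|
    DirectSum.addHom_ext fun x a => by simp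
  map_comp f g := AddCommGrpCat.hom_ext <| QuotientAddGroup.addMonoidHom_ext _ <|
    DirectSum.addHom_ext fun x a => by simp

noncomputable def colimExt.ι (U : Opens X) (x : U) :
    N.obj (toOrd (x : X)) →+ (colimExt N).obj U :=
  (QuotientAddGroup.mk' _).comp (DirectSum.of (fun y : U => N.obj (toOrd (y : X))) x)

variable {N} {U : Opens X}

lemma colimExt.ι_map_apply {z x : U} (h : toOrd (z : X) ≤ toOrd (x : X))
    (a : N.obj (toOrd (z : X))) :
    colimExt.ι N U x ((N.map (homOfLE h)).hom a) = colimExt.ι N U z a :=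
  QuotientAddGroup.eq_iff_sub_mem.mpr (AddSubgroup.subset_closure ⟨z, x, h, a, rfl⟩)

@[simp]
lemma colimExt.map_ι {V : Opens X} (f : U ⟶ V) (x : U) (a : N.obj (toOrd (x : X))) :
    (colimExt N).map f (colimExt.ι N U x a) = colimExt.ι N V ⟨x, leOfHom f x.2⟩ a :=
  congrArg QuotientAddGroup.mk (DirectSum.toAddMonoid_of _ _ _)

lemma colimExt.hom_ext {A : Type} [AddCommGroup A] {g₁ g₂ : (colimExt N).obj U →+ A}
    (h : ∀ x, g₁.comp (colimExt.ι N U x) = g₂.comp (colimExt.ι N U x)) : g₁ = g₂ :=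
  QuotientAddGroup.addMonoidHom_ext _ <| DirectSum.addHom_ext' h

@[elab_as_elim]
lemma colimExt.induction_on {p : (colimExt N).obj U → Prop} (q : (colimExt N).obj U) (zero : p 0)
    (ι : ∀ x a, p (colimExt.ι N U x a)) (add : ∀ q q', p q → p q' → p (q + q')) :
    p q := by
  induction q using QuotientAddGroup.induction_on with | H d => ?_
  induction d using DirectSum.induction_on with
  | zero => exact zero
  | of x a => exact ι x a
  | add d d' hd hd' => exact add _ _ hd hd'

noncomputable def colimExt.desc {A : Type} [AddCommGroup A]
    (ψ : ∀ x : U, N.obj (toOrd (x : X)) →+ A)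
    (hψ : ∀ (z x : U) (h : toOrd (z : X) ≤ toOrd (x : X)) (a : N.obj (toOrd (z : X))),
      ψ x ((N.map (homOfLE h)).hom a) = ψ z a) : (colimExt N).obj U →+ A :=
  QuotientAddGroup.lift _ (DirectSum.toAddMonoid ψ) <| (AddSubgroup.closure_le _).mpr <| by
    rintro _ ⟨z, x, h, a, rfl⟩
    simp [hψ]

@[simp]
lemma colimExt.desc_ι {A : Type} [AddCommGroup A] (ψ : ∀ x : U, N.obj (toOrd (x : X)) →+ A)
    (hψ : ∀ (z x : U) (h : toOrd (z : X) ≤ toOrd (x : X)) (a : N.obj (toOrd (z : X))),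
      ψ x ((N.map (homOfLE h)).hom a) = ψ z a) (x : U) (a : N.obj (toOrd (x : X))) :
    colimExt.desc ψ hψ (colimExt.ι N U x a) = ψ x a :=
  DirectSum.toAddMonoid_of _ _ _

end ColimitExtension

section ColimitExtensionIsCosheaf

open scoped Classical

variable {X : Type} [TopologicalSpace X] (N : XOrd X ⥤ AddCommGrpCat.{0})
  {J : Type} (U : J → Opens X)

noncomputable def coverIndex (x : ↥(⨆ j, U j)) : J := (Opens.mem_iSup.mp x.2).choose

lemma mem_coverIndex (x : ↥(⨆ j, U j)) : (x : X) ∈ U (coverIndex U x) :=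
  (Opens.mem_iSup.mp x.2).choose_spec

variable [DecidableEq J]

@[simp]
lemma coverSum_colimExt_ι (j : J) (x : U j) (a : N.obj (toOrd (x : X))) :
    coverSum (colimExt N) U (le_iSup U)
        (DirectSum.of (fun j => (colimExt N).obj (U j)) j (colimExt.ι N (U j) x a)) =
      colimExt.ι N (⨆ j, U j) ⟨x, le_iSup U j x.2⟩ a :=
  (coverSum_of _ U _ j _).trans (colimExt.map_ι _ x a)

@[simp]
lemma coverDiff_colimExt_ι (p : J × J) (x : ↥(U p.1 ⊓ U p.2)) (a : N.obj (toOrd (x : X))) :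
    coverDiff (colimExt N) U
        (DirectSum.of (fun p => (colimExt N).obj (U p.1 ⊓ U p.2)) p (colimExt.ι N _ x a)) =
      DirectSum.of (fun j => (colimExt N).obj (U j)) p.1 (colimExt.ι N _ ⟨x, x.2.1⟩ a) -
        DirectSum.of (fun j => (colimExt N).obj (U j)) p.2 (colimExt.ι N _ ⟨x, x.2.2⟩ a) :=
  (coverDiff_of _ U p _).trans <| congrArg₂ (· - ·)
    (congrArg _ (colimExt.map_ι _ x a)) (congrArg _ (colimExt.map_ι _ x a))

lemma surjective_coverSum_colimExt : Function.Surjective (coverSum (colimExt N) U (le_iSup U)) := by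
  intro q
  induction q using colimExt.induction_on with
  | zero => exact ⟨0, map_zero _⟩
  | ι x a =>
    obtain ⟨j, hj⟩ := Opens.mem_iSup.mp x.2
    exact ⟨_, coverSum_colimExt_ι N U j ⟨x, hj⟩ a⟩
  | add q q' hq hq' =>
    obtain ⟨b, rfl⟩ := hq
    obtain ⟨b', rfl⟩ := hq'
    exact ⟨b + b', map_add _ _ _⟩

lemma coverSum_comp_coverDiff_colimExt :
    (coverSum (colimExt N) U (le_iSup U)).comp (coverDiff (colimExt N) U) = 0 :=
  DirectSum.addHom_ext' fun _ => colimExt.hom_ext fun _ => by ext; simp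

lemma mk_of_colimExt_ι_eq {j k : J} {x : X} (hj : x ∈ U j) (hk : x ∈ U k)
    (a : N.obj (toOrd x)) :
    (QuotientAddGroup.mk (DirectSum.of (fun j => (colimExt N).obj (U j)) j
        (colimExt.ι N (U j) ⟨x, hj⟩ a)) : _ ⧸ (coverDiff (colimExt N) U).range) =
      QuotientAddGroup.mk
        (DirectSum.of (fun j => (colimExt N).obj (U j)) k (colimExt.ι N (U k) ⟨x, hk⟩ a)) := by
  rw [QuotientAddGroup.eq_iff_sub_mem]
  exact ⟨_, coverDiff_colimExt_ι N U (j, k) ⟨x, hj, hk⟩ a⟩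

noncomputable def coverSection [Finite X] :
    (colimExt N).obj (⨆ j, U j) →+
      (⨁ j, (colimExt N).obj (U j)) ⧸ (coverDiff (colimExt N) U).range :=
  colimExt.desc (fun x => (QuotientAddGroup.mk' _).comp
      ((DirectSum.of (fun j => (colimExt N).obj (U j)) (coverIndex U x)).comp
        (colimExt.ι N _ ⟨x, mem_coverIndex U x⟩))) fun z x h a => by
    have hz : (z : X) ∈ U (coverIndex U x) :=
      minSet_subset (U _).2 (mem_coverIndex U x) (toOrd_le_iff.mp h)
    simp only [AddMonoidHom.comp_apply, QuotientAddGroup.mk'_apply]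
    rw [colimExt.ι_map_apply (z := ⟨(z : X), hz⟩) (x := ⟨(x : X), mem_coverIndex U x⟩) h a]
    exact mk_of_colimExt_ι_eq N U hz (mem_coverIndex U z) a

lemma coverSection_comp_coverSum [Finite X] :
    (coverSection N U).comp (coverSum (colimExt N) U (le_iSup U)) = QuotientAddGroup.mk' _ :=
  DirectSum.addHom_ext' fun j => colimExt.hom_ext fun x => by
    ext a
    simpa [coverSection] using mk_of_colimExt_ι_eq N U _ x.2 a

theorem colimExt_isCosheaf [Finite X] : IsCosheaf (colimExt N) := by
  refine (isCosheaf_iff _).mpr fun J _ U => ⟨surjective_coverSum_colimExt N U,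
    Function.Exact.of_comp_of_mem_range
      (congrArg DFunLike.coe (coverSum_comp_coverDiff_colimExt N U)) fun y hy => ?_⟩
  have hy' : QuotientAddGroup.mk' (coverDiff (colimExt N) U).range y = 0 := by
    rw [← coverSection_comp_coverSum N U, AddMonoidHom.comp_apply, hy, map_zero]
  exact (QuotientAddGroup.eq_zero_iff y).mp hy'

end ColimitExtensionIsCosheaf

section EssSurj

variable {X : Type} [TopologicalSpace X] [Finite X] (N : XOrd X ⥤ AddCommGrpCat.{0})

noncomputable def colimExtEval (x : X) : (colimExt N).obj (minOpens x) →+ N.obj (toOrd x) :=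
  colimExt.desc (fun z => (N.map (homOfLE (toOrd_le_of_mem_minOpens z.2))).hom)
    fun _ _ _ a => map_map_apply N _ _ _ a

lemma colimExtEval_ι {x : X} (z : minOpens x) (a : N.obj (toOrd (z : X))) :
    colimExtEval N x (colimExt.ι N _ z a) =
      (N.map (homOfLE (toOrd_le_of_mem_minOpens z.2))).hom a :=
  colimExt.desc_ι _ _ z a

noncomputable def colimExtMinOpensEquiv (x : X) :
    (colimExt N).obj (minOpens x) ≃+ N.obj (toOrd x) :=
  AddMonoidHom.toAddEquiv (colimExtEval N x) (colimExt.ι N (minOpens x) ⟨x, mem_minSet x⟩)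
    (colimExt.hom_ext fun z => by
      ext a
      simpa [colimExtEval_ι] using colimExt.ι_map_apply (z := z) (x := ⟨x, mem_minSet x⟩) _ a)
    (by
      ext a
      rw [AddMonoidHom.comp_apply, colimExtEval_ι]
      simp)

noncomputable def resColimExtIso : (res X).obj ⟨colimExt N, colimExt_isCosheaf N⟩ ≅ N :=
  NatIso.ofComponents (fun x => (colimExtMinOpensEquiv N x).toAddCommGrpIso) fun {_ y} f =>
    AddCommGrpCat.hom_ext <| colimExt.hom_ext fun z => AddMonoidHom.ext fun a =>
      (congrArg (colimExtEval N y) (colimExt.map_ι (homOfLE (leOfHom f)) z a)).trans <|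
        (colimExtEval_ι N (x := y) ⟨z, leOfHom f z.2⟩ a).trans <|
          (map_map_apply N _ _ _ a).symm.trans (congrArg _ (colimExtEval_ι N z a).symm)

instance : (res X).EssSurj :=
  ⟨fun N => ⟨⟨colimExt N, colimExt_isCosheaf N⟩, ⟨resColimExtIso N⟩⟩⟩

instance : (res X).IsEquivalence where

end EssSurj

theorem stmt_14_general (X : Type) [TopologicalSpace X] [Finite X] :
    ∃ e : ObjectProperty.FullSubcategory (IsCosheaf (X := X)) ≌ (XOrd X ⥤ AddCommGrpCat.{0}),
      ∀ (F : ObjectProperty.FullSubcategory (IsCosheaf (X := X))) (x : XOrd X),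
        (e.functor.obj F).obj x = F.obj.obj (minOpens (X := X) x) :=
  ⟨(res X).asEquivalence, fun _ _ => rfl⟩

/-- For a finite T0 space `X`, restriction to minimal open neighbourhoods (`Res`) and the
colimit extension (`Colim`) are mutually inverse equivalences between the category of
cosheaves of abelian groups on `Open(X)` and the category of representations of `X`;
in particular there is an equivalence whose functor sends a cosheaf `F` to the
representation `x ↦ F(U_x)`. -/
theorem stmt_14 (X : Type) [TopologicalSpace X] [Finite X] [T0Space X] :
    ∃ e : ObjectProperty.FullSubcategory (IsCosheaf (X := X)) ≌ (XOrd X ⥤ AddCommGrpCat.{0}),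
      ∀ (F : ObjectProperty.FullSubcategory (IsCosheaf (X := X))) (x : XOrd X),
        (e.functor.obj F).obj x = F.obj.obj (minOpens (X := X) x) :=
  stmt_14_general X
end
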